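/- Let 𝔽 be a clone on a set A and let 𝕊 ⊆ 𝔽^(1) be a transformation semigroup contained in the unary part of 𝔽. If cf(𝕊) > ℵ₀ and 𝔽 has finite relative rank modulo 𝕊, then cf(𝔽) > ℵ₀. -/

import Mathlib

/-! Take a countable increasing chain of proper subclones with union `F`. The finite set `N` of
extra generators lies in a single member. The unary traces of the members form an increasing chain
of subsemigroups covering `S`, so uncountable cofinality of `S` puts `S` into a single member as
well. Beyond both indices a member contains the generators `S ∪ N` of `F`, hence is `F`. -/

universe u v w

namespace CloneTheory

/-- Finitary operations on `A`: the element `⟨n, f⟩` is an operation of arity `n + 1`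
(so all arities are `≥ 1`). -/
def Ops (A : Type w) : Type w := Σ n : ℕ, (Fin (n + 1) → A) → A

/-- `S` is a clone on `A`: it contains all projections and is closed under composition. -/
structure IsClone (A : Type w) (S : Set (Ops A)) : Prop where
  proj : ∀ (n : ℕ) (i : Fin (n + 1)), (⟨n, fun x => x i⟩ : Ops A) ∈ S
  comp : ∀ (n m : ℕ) (f : (Fin (n + 1) → A) → A) (g : Fin (n + 1) → (Fin (m + 1) → A) → A),
    (⟨n, f⟩ : Ops A) ∈ S → (∀ i, (⟨m, g i⟩ : Ops A) ∈ S) →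
    (⟨m, fun x => f fun i => g i x⟩ : Ops A) ∈ S

/-- The clone generated by a set of operations. -/
def cloneGen (A : Type w) (M : Set (Ops A)) : Set (Ops A) :=
  ⋂₀ {S : Set (Ops A) | IsClone A S ∧ M ⊆ S}

/-- The complex product of two sets of operations. -/
def cProd (A : Type w) (U V : Set (Ops A)) : Set (Ops A) :=
  {op | ∃ (n m : ℕ) (f : (Fin (n + 1) → A) → A) (g : Fin (n + 1) → (Fin (m + 1) → A) → A),
    (⟨n, f⟩ : Ops A) ∈ U ∧ (∀ i, (⟨m, g i⟩ : Ops A) ∈ V) ∧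
    op = ⟨m, fun x => f fun i => g i x⟩}

/-- The set `J_A^{(k)}` of projections of arity `k + 1`. -/
def projSet (A : Type w) (k : ℕ) : Set (Ops A) :=
  {op | ∃ i : Fin (k + 1), op = ⟨k, fun x => x i⟩}

/-- The sets `U^{[k,i]}`: operations of arity `k + 1` obtained from `U` by terms of depth
at most `i`. -/
def iter (A : Type w) (U : Set (Ops A)) (k : ℕ) : ℕ → Set (Ops A)
  | 0 => projSet A k
  | i + 1 => cProd A U (iter A U k i) ∪ iter A U k i

/-- The part of `F` of arity `k + 1`. -/
def arityPart (A : Type w) (F : Set (Ops A)) (k : ℕ) : Set (Ops A) :=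
  {op | op ∈ F ∧ op.1 = k}

/-- A clone `F` has the Bergman property if for every generating set `H` and every arity there
is a uniform depth bound generating the whole part of that arity. -/
def BergmanProperty (A : Type w) (F : Set (Ops A)) : Prop :=
  ∀ H : Set (Ops A), H ⊆ F → cloneGen A H = F →
    ∀ k : ℕ, ∃ n : ℕ, iter A H k n = arityPart A F k

/-- A clone `F` has uncountable cofinality: there is no countable increasing chain of proper
subclones of `F` whose union is `F`. -/
def UncountableCofinality (A : Type w) (F : Set (Ops A)) : Prop :=
  ¬ ∃ c : ℕ → Set (Ops A),
      (∀ n, IsClone A (c n)) ∧ (∀ n, c n ⊆ F) ∧ (∀ n, c n ⊆ c (n + 1)) ∧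
      (∀ n, c n ≠ F) ∧ (⋃ n, c n) = F

/-- A clone `F` has uncountable strong cofinality: there is no countable strong cofinal chain
for `F`. -/
def UncountableStrongCofinality (A : Type w) (F : Set (Ops A)) : Prop :=
  ¬ ∃ c : ℕ → Set (Ops A),
      (∀ n, c n ⊆ c (n + 1)) ∧ (∀ n, c n ⊆ F) ∧ (∀ n, c n ≠ F) ∧ (⋃ n, c n) = F ∧
      (∃ k₀ : ℕ, ∀ n, ∀ k, k₀ ≤ k → arityPart A (c n) k ≠ arityPart A F k) ∧
      (∀ n, ∃ m, ∀ k, iter A (c n) k 2 ⊆ c m)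

/-- A clone is finitely generated if it is generated by a finite set. -/
def FinitelyGeneratedClone (A : Type w) (F : Set (Ops A)) : Prop :=
  ∃ H : Set (Ops A), H.Finite ∧ H ⊆ F ∧ cloneGen A H = F

end CloneTheory

namespace CloneTheory

/-- View a transformation of `A` as a unary operation on `A`. -/
def unaryOp (A : Type w) (f : A → A) : Ops A := ⟨0, fun x => f (x 0)⟩

/-- A transformation semigroup `S` has uncountable cofinality: there is no countable increasing
chain of proper subsemigroups of `S` whose union is `S`. -/
def SemigroupUncountableCofinality (A : Type w) (S : Set (A → A)) : Prop :=
  ¬ ∃ c : ℕ → Set (A → A),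
      (∀ n, c n ⊆ S) ∧ (∀ n, ∀ f ∈ c n, ∀ g ∈ c n, f ∘ g ∈ c n) ∧
      (∀ n, c n ⊆ c (n + 1)) ∧ (∀ n, c n ≠ S) ∧ (⋃ n, c n) = S

end CloneTheory

namespace CloneTheory

variable {A : Type w}

theorem cloneGen_subset {M C : Set (Ops A)} (hC : IsClone A C) (hM : M ⊆ C) :
    cloneGen A M ⊆ C :=
  Set.sInter_subset_of_mem ⟨hC, hM⟩

theorem IsClone.unaryOp_comp_mem {C : Set (Ops A)} (hC : IsClone A C) {f g : A → A}
    (hf : unaryOp A f ∈ C) (hg : unaryOp A g ∈ C) : unaryOp A (f ∘ g) ∈ C :=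
  hC.comp 0 0 _ _ hf fun _ => hg

theorem SemigroupUncountableCofinality.exists_subset {S : Set (A → A)}
    (hS : ∀ f ∈ S, ∀ g ∈ S, f ∘ g ∈ S) (hcf : SemigroupUncountableCofinality A S)
    {c : ℕ → Set (A → A)} (hmono : Monotone c) (hc : ∀ n, ∀ f ∈ c n, ∀ g ∈ c n, f ∘ g ∈ c n)
    (hcover : S ⊆ ⋃ n, c n) : ∃ n, S ⊆ c n := by
  by_contra! hne
  refine hcf ⟨fun n => S ∩ c n, fun n => Set.inter_subset_left, ?_,
    fun n => Set.inter_subset_inter_right S (hmono n.le_succ), ?_, ?_⟩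
  · exact fun n f hf g hg => ⟨hS f hf.1 g hg.1, hc n f hf.2 g hg.2⟩
  · exact fun n h => hne n (Set.inter_eq_left.mp h)
  · rw [← Set.inter_iUnion, Set.inter_eq_left.mpr hcover]

end CloneTheory

open CloneTheory in
theorem statement14_general
    (A : Type w) (F : Set (Ops A))
    (S : Set (A → A))
    (hSsemi : ∀ f ∈ S, ∀ g ∈ S, f ∘ g ∈ S)
    (hSsub : ∀ f ∈ S, unaryOp A f ∈ F)
    (hScf : SemigroupUncountableCofinality A S)
    (hrank : ∃ N : Set (Ops A), N.Finite ∧ N ⊆ F ∧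
      cloneGen A ((unaryOp A '' S) ∪ N) = F) :
    UncountableCofinality A F := by
  rintro ⟨c, hclone, hcF, hsucc, hproper, hunion⟩
  obtain ⟨N, hNfin, hNF, hgen⟩ := hrank
  have hmono : Monotone c := monotone_nat_of_le_succ hsucc
  obtain ⟨n₀, hN⟩ : ∃ n, N ⊆ c n := by
    simpa using hmono.directed_le.exists_mem_subset_of_finset_subset_biUnion
      (s := hNfin.toFinset) (by simpa [hunion] using hNF)
  obtain ⟨n₁, hS⟩ : ∃ n, S ⊆ {f | unaryOp A f ∈ c n} :=
    hScf.exists_subset hSsemi (fun _ _ hmn _ hf => hmono hmn hf)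
      (fun n _ hf _ hg => (hclone n).unaryOp_comp_mem hf hg)
      (fun f hf => by simpa using hunion.ge (hSsub f hf))
  refine hproper (max n₀ n₁) (subset_antisymm (hcF _) ?_)
  rw [← hgen]
  refine cloneGen_subset (hclone _) (Set.union_subset ?_ (hN.trans (hmono (le_max_left _ _))))
  rintro _ ⟨f, hf, rfl⟩
  exact hmono (le_max_right _ _) (hS hf)

open CloneTheory in
/-- Proposition: if `𝕊 ⊆ 𝔽^(1)` is a transformation semigroup with uncountable cofinality and
`𝔽` has finite relative rank modulo `𝕊`, then `𝔽` has uncountable cofinality. -/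
theorem statement14
    (A : Type w) (F : Set (Ops A)) (hF : IsClone A F)
    (S : Set (A → A))
    (hSsemi : ∀ f ∈ S, ∀ g ∈ S, f ∘ g ∈ S)
    (hSsub : ∀ f ∈ S, unaryOp A f ∈ F)
    (hScf : SemigroupUncountableCofinality A S)
    (hrank : ∃ N : Set (Ops A), N.Finite ∧ N ⊆ F ∧
      cloneGen A ((unaryOp A '' S) ∪ N) = F) :
    UncountableCofinality A F :=
  statement14_general A F S hSsemi hSsub hScf hrank
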